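/- Soundness of DCila with respect to swap Kripke models: for every set of formulas Γ ∪ {φ} ⊆ For(Σ), if Γ ⊢_DCila φ then Γ ⊨_DCila φ. -/

import Mathlib

/-- Formulas over the signature Σ = {∧, ∨, →, ¬, ∘, O}, with countably many
propositional variables. -/
inductive Form : Type
  | var : ℕ → Form
  | and : Form → Form → Form
  | or : Form → Form → Form
  | imp : Form → Form → Form
  | neg : Form → Form
  | circ : Form → Form
  | obl : Form → Form

namespace Form
/-- ⊥_α := (α ∧ ¬α) ∧ ∘α -/
def bot (α : Form) : Form := (α.and α.neg).and α.circ
end Form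

/-- Theorems of DCila: the DmbC axioms (CPL⁺, (EM), (bc), (O-K), (O-E)) plus
(ci), (cl), (cf) and the propagation axioms (ca_#) for # ∈ {∧, ∨, →},
with Modus Ponens and O-necessitation. -/
inductive ThmDCila : Form → Prop
  | A1 (α β : Form) : ThmDCila (α.imp (β.imp α))
  | A2 (α β γ : Form) : ThmDCila ((α.imp (β.imp γ)).imp ((α.imp β).imp (α.imp γ)))
  | A3 (α β : Form) : ThmDCila (α.imp (β.imp (α.and β)))
  | A4 (α β : Form) : ThmDCila ((α.and β).imp α)
  | A5 (α β : Form) : ThmDCila ((α.and β).imp β)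
  | A6 (α β : Form) : ThmDCila (α.imp (α.or β))
  | A7 (α β : Form) : ThmDCila (β.imp (α.or β))
  | A8 (α β γ : Form) : ThmDCila ((α.imp γ).imp ((β.imp γ).imp ((α.or β).imp γ)))
  | A9 (α β : Form) : ThmDCila (((α.imp β).imp α).imp α)
  | EM (α : Form) : ThmDCila (α.or α.neg)
  | bc (α β : Form) : ThmDCila (α.circ.imp (α.imp (α.neg.imp β)))
  | ci (α : Form) : ThmDCila (α.circ.neg.imp (α.and α.neg))
  | cl (α : Form) : ThmDCila ((α.and α.neg).neg.imp α.circ)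
  | cf (α : Form) : ThmDCila (α.neg.neg.imp α)
  | caAnd (α β : Form) : ThmDCila ((α.circ.and β.circ).imp (α.and β).circ)
  | caOr (α β : Form) : ThmDCila ((α.circ.and β.circ).imp (α.or β).circ)
  | caImp (α β : Form) : ThmDCila ((α.circ.and β.circ).imp (α.imp β).circ)
  | OK (α β : Form) : ThmDCila ((α.imp β).obl.imp (α.obl.imp β.obl))
  | OE (α : Form) : ThmDCila (α.bot.obl.imp α.bot)
  | mp {α β : Form} : ThmDCila (α.imp β) → ThmDCila α → ThmDCila β
  | nec {α : Form} : ThmDCila α → ThmDCila α.obl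

/-- conj γ [γ₂,…,γ_k] = γ ∧ γ₂ ∧ … ∧ γ_k -/
def conj (γ : Form) : List Form → Form
  | [] => γ
  | δ :: l => γ.and (conj δ l)

/-- Γ ⊢_DCila φ iff ⊢ φ or ⊢ (γ₁ ∧ … ∧ γ_k) → φ for some γ₁,…,γ_k ∈ Γ, k ≥ 1. -/
def DerivDCila (Γ : Set Form) (φ : Form) : Prop :=
  ThmDCila φ ∨ ∃ (γ : Form) (l : List Form),
    (∀ δ ∈ γ :: l, δ ∈ Γ) ∧ ThmDCila ((conj γ l).imp φ)

/-- The three snapshots T = (1,0), t = (1,1), F = (0,1). -/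
inductive SV : Type
  | T | t | F
deriving DecidableEq

/-- First coordinate of a snapshot. -/
def SV.p1 : SV → Bool
  | .T => true | .t => true | .F => false

/-- Second coordinate of a snapshot. -/
def SV.p2 : SV → Bool
  | .T => false | .t => true | .F => true

/-- Designated values: D = {T, t}, i.e. first coordinate is 1. -/
def SV.desig (a : SV) : Prop := a.p1 = true

/-- The Boolean (classical) snapshots {T, F}. -/
def SV.boo (a : SV) : Prop := a = SV.T ∨ a = SV.F

/-- Swap Kripke model conditions for DCila on a serial frame (W,R):
the DCi conditions (with ¬ interpreted by ¬̃₁ and ∘ by ∘̃₂) plus the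
restrictions that v_w(α) = t implies v_w(α ∧ ¬α) = T, and that
v_w(α), v_w(β) ∈ {T,F} implies v_w(α # β) ∈ {T,F} for # ∈ {∧, ∨, →}. -/
structure IsModelDCila {W : Type} (R : W → W → Prop) (v : W → Form → SV) : Prop where
  serial : ∀ w, ∃ w', R w w'
  and_ : ∀ w α β, (v w (α.and β)).p1 = ((v w α).p1 && (v w β).p1)
  or_ : ∀ w α β, (v w (α.or β)).p1 = ((v w α).p1 || (v w β).p1)
  imp_ : ∀ w α β, (v w (α.imp β)).p1 = (!(v w α).p1 || (v w β).p1)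
  neg_ : ∀ w α, (v w α.neg).p1 = (v w α).p2 ∧ (v w α.neg).p2 ≤ (v w α).p1
  circ_ : ∀ w α, (v w α.circ).p1 = !((v w α).p1 && (v w α).p2) ∧
    (v w α.circ).p2 = ((v w α).p1 && (v w α).p2)
  obl_ : ∀ w α, ((v w α.obl).p1 = true ↔ ∀ w', R w w' → (v w' α).p1 = true)
  cl_ : ∀ w α, v w α = SV.t → v w (α.and α.neg) = SV.T
  booAnd : ∀ w α β, (v w α).boo → (v w β).boo → (v w (α.and β)).boo
  booOr : ∀ w α β, (v w α).boo → (v w β).boo → (v w (α.or β)).boo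
  booImp : ∀ w α β, (v w α).boo → (v w β).boo → (v w (α.imp β)).boo

/-- Γ ⊨_DCila φ : semantic consequence over all swap Kripke models for DCila. -/
def SemDCila (Γ : Set Form) (φ : Form) : Prop :=
  ∀ (W : Type) (R : W → W → Prop) (v : W → Form → SV), Nonempty W →
    IsModelDCila R v → ∀ w : W, (∀ γ ∈ Γ, (v w γ).desig) → (v w φ).desig

/-!
Soundness is proved by induction on derivations: every axiom is designated at every world of
every model, and Modus Ponens and O-necessitation preserve designation at all worlds. Besides the
truth tables of the first coordinate, (cl) needs the restriction v(α) = t ⇒ v(α ∧ ¬α) = T,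
(ca_#) needs the closure of {T, F} under the binary connectives, and (O-E) needs seriality.
-/

namespace SV

theorem desig_or_p2 (a : SV) : a.desig ∨ a.p2 = true := by
  cases a <;> simp [desig, p1, p2]

theorem eq_t_of_desig_of_p2 {a : SV} (h₁ : a.desig) (h₂ : a.p2 = true) : a = SV.t := by
  cases a <;> simp_all [desig, p1, p2]

theorem boo_iff_not_desig_and_p2 {a : SV} : a.boo ↔ ¬(a.desig ∧ a.p2 = true) := by
  cases a <;> simp [boo, desig, p1, p2]

end SV

namespace IsModelDCila

variable {W : Type} {R : W → W → Prop} {v : W → Form → SV}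

theorem desig_and (M : IsModelDCila R v) (w : W) (α β : Form) :
    (v w (α.and β)).desig ↔ (v w α).desig ∧ (v w β).desig := by
  simp only [SV.desig, M.and_, Bool.and_eq_true]

theorem desig_or (M : IsModelDCila R v) (w : W) (α β : Form) :
    (v w (α.or β)).desig ↔ (v w α).desig ∨ (v w β).desig := by
  simp only [SV.desig, M.or_, Bool.or_eq_true]

theorem desig_imp (M : IsModelDCila R v) (w : W) (α β : Form) :
    (v w (α.imp β)).desig ↔ ((v w α).desig → (v w β).desig) := by
  simp only [SV.desig, M.imp_, Bool.or_eq_true, Bool.not_eq_true', imp_iff_not_or,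
    Bool.not_eq_true]

theorem desig_neg (M : IsModelDCila R v) (w : W) (α : Form) :
    (v w α.neg).desig ↔ (v w α).p2 = true := by
  rw [SV.desig, (M.neg_ w α).1]

theorem desig_of_p2_neg (M : IsModelDCila R v) {w : W} {α : Form}
    (h : (v w α.neg).p2 = true) : (v w α).desig :=
  top_le_iff.mp (h ▸ (M.neg_ w α).2 :)

theorem desig_circ (M : IsModelDCila R v) (w : W) (α : Form) :
    (v w α.circ).desig ↔ ¬((v w α).desig ∧ (v w α).p2 = true) := by
  simp only [SV.desig, (M.circ_ w α).1, Bool.not_eq_true', Bool.and_eq_false_iff,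
    not_and_or, Bool.not_eq_true]

theorem p2_circ (M : IsModelDCila R v) (w : W) (α : Form) :
    (v w α.circ).p2 = true ↔ (v w α).desig ∧ (v w α).p2 = true := by
  rw [(M.circ_ w α).2, Bool.and_eq_true, SV.desig]

theorem desig_obl (M : IsModelDCila R v) (w : W) (α : Form) :
    (v w α.obl).desig ↔ ∀ w', R w w' → (v w' α).desig :=
  M.obl_ w α

theorem not_desig_bot (M : IsModelDCila R v) (w : W) (α : Form) : ¬(v w α.bot).desig := by
  rw [Form.bot, M.desig_and, M.desig_and, M.desig_neg, M.desig_circ]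
  tauto

theorem not_desig_obl_bot (M : IsModelDCila R v) (w : W) (α : Form) :
    ¬(v w α.bot.obl).desig := fun h =>
  let ⟨w', hw'⟩ := M.serial w
  M.not_desig_bot w' α ((M.desig_obl w _).1 h w' hw')

theorem desig_circ_of_desig_neg_and_neg (M : IsModelDCila R v) (w : W) (α : Form)
    (h : (v w (α.and α.neg).neg).desig) : (v w α.circ).desig := by
  rw [M.desig_circ]
  rintro ⟨h₁, h₂⟩
  rw [M.desig_neg, M.cl_ w α (SV.eq_t_of_desig_of_p2 h₁ h₂)] at h
  exact Bool.false_ne_true h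

theorem desig_ca_of_boo_preserving (M : IsModelDCila R v) (op : Form → Form → Form)
    (hop : ∀ w α β, (v w α).boo → (v w β).boo → (v w (op α β)).boo) (w : W) (α β : Form) :
    (v w ((α.circ.and β.circ).imp (op α β).circ)).desig := by
  simp only [M.desig_imp, M.desig_and, M.desig_circ, ← SV.boo_iff_not_desig_and_p2]
  exact fun h => hop w α β h.1 h.2

theorem desig_conj (M : IsModelDCila R v) (w : W) (γ : Form) (l : List Form) :
    (v w (conj γ l)).desig ↔ ∀ δ ∈ γ :: l, (v w δ).desig := by
  induction l generalizing γ with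
  | nil => simp [conj]
  | cons δ l ih => simp only [conj, M.desig_and, ih, List.forall_mem_cons]

theorem desig_of_thm (M : IsModelDCila R v) {φ : Form} (h : ThmDCila φ) (w : W) :
    (v w φ).desig := by
  induction h generalizing w with
  | A1 | A2 | A3 | A4 | A5 | A6 | A7 | A8 | A9 =>
    simp only [M.desig_imp, M.desig_and, M.desig_or]
    tauto
  | EM α => exact (M.desig_or w _ _).2 ((SV.desig_or_p2 _).imp_right (M.desig_neg w α).2)
  | bc | ci =>
    simp only [M.desig_imp, M.desig_and, M.desig_neg, M.desig_circ, M.p2_circ]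
    tauto
  | cl α => exact (M.desig_imp w _ _).2 (M.desig_circ_of_desig_neg_and_neg w α)
  | cf α => exact (M.desig_imp w _ _).2 fun h => M.desig_of_p2_neg ((M.desig_neg w _).1 h)
  | caAnd α β => exact M.desig_ca_of_boo_preserving _ M.booAnd w α β
  | caOr α β => exact M.desig_ca_of_boo_preserving _ M.booOr w α β
  | caImp α β => exact M.desig_ca_of_boo_preserving _ M.booImp w α β
  | OK α β =>
    simp only [M.desig_imp, M.desig_obl]
    exact fun hαβ hα w' hw' => hαβ w' hw' (hα w' hw')
  | OE α => exact (M.desig_imp w _ _).2 fun h => absurd h (M.not_desig_obl_bot w α)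
  | mp _ _ ihαβ ihα => exact (M.desig_imp w _ _).1 (ihαβ w) (ihα w)
  | nec _ ih => exact (M.desig_obl w _).2 fun w' _ => ih w'

end IsModelDCila

/-- Soundness of DCila w.r.t. swap Kripke models. -/
theorem DCila_soundness (Γ : Set Form) (φ : Form) :
    DerivDCila Γ φ → SemDCila Γ φ := by
  intro h W R v _ M w hΓ
  rcases h with hφ | ⟨γ, l, hΓl, hφ⟩
  · exact M.desig_of_thm hφ w
  · exact (M.desig_imp w _ _).1 (M.desig_of_thm hφ w)
      ((M.desig_conj w γ l).2 fun δ hδ => hΓ δ (hΓl δ hδ))
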